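/- Fix p2 in (e^{-1/2}, 1). Then there exists epsilon > 0 such that for all p1 in (0, epsilon) with p1 + p2 < 1, p1^2 * log p1 + p2^2 * log p2 < (p1 + p2)^2 * log(p1 + p2). -/

import Mathlib

/-! Since `d/dx (x² log x) = x (2 log x + 1)`, the map `x ↦ x² log x` is strictly increasing on
`[e^{-1/2}, ∞)`, so `p2² log p2 < (p1 + p2)² log (p1 + p2)`; and `p1² log p1 < 0` for `p1 ∈ (0, 1)`.
Hence `ε = 1` works. -/

open Real Set

lemma hasDerivAt_sq_mul_log {x : ℝ} (hx : x ≠ 0) :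
    HasDerivAt (fun x : ℝ => x ^ 2 * log x) (x * (2 * log x + 1)) x := by
  refine ((hasDerivAt_pow 2 x).mul (hasDerivAt_log hx)).congr_deriv ?_
  field_simp
  ring

lemma strictMonoOn_sq_mul_log : StrictMonoOn (fun x : ℝ => x ^ 2 * log x)
    (Ici (exp (-(1 / 2)))) := by
  have hpos : ∀ x ∈ Ici (exp (-(1 / 2))), 0 < x := fun x hx => (exp_pos _).trans_le hx
  refine strictMonoOn_of_deriv_pos (convex_Ici _) ?_ fun x hx => ?_
  · exact fun x hx => (hasDerivAt_sq_mul_log (hpos x hx).ne').continuousAt.continuousWithinAt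
  rw [interior_Ici] at hx
  have hx0 : 0 < x := hpos x (mem_Ici.2 hx.le)
  have hlog : -(1 / 2) < log x := (lt_log_iff_exp_lt hx0).2 hx
  rw [(hasDerivAt_sq_mul_log hx0.ne').deriv]
  exact mul_pos hx0 (by linarith)

theorem stmt_8_general (p2 : ℝ) (h0 : Real.exp (-(1 / 2)) < p2) :
    ∃ ε > 0, ∀ p1 : ℝ, 0 < p1 → p1 < ε → p1 + p2 < 1 →
      p1 ^ 2 * Real.log p1 + p2 ^ 2 * Real.log p2 <
        (p1 + p2) ^ 2 * Real.log (p1 + p2) := by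
  refine ⟨1, one_pos, fun p1 hp1 hp1_lt_one _ => ?_⟩
  have hp1_term : p1 ^ 2 * log p1 < 0 :=
    mul_neg_of_pos_of_neg (by positivity) (log_neg hp1 hp1_lt_one)
  have hincrease : p2 ^ 2 * log p2 < (p1 + p2) ^ 2 * log (p1 + p2) :=
    strictMonoOn_sq_mul_log h0.le (mem_Ici.2 (by linarith)) (by linarith)
  linarith

theorem stmt_8 (p2 : ℝ) (h0 : Real.exp (-(1 / 2)) < p2) (h1 : p2 < 1) :
    ∃ ε > 0, ∀ p1 : ℝ, 0 < p1 → p1 < ε → p1 + p2 < 1 →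
      p1 ^ 2 * Real.log p1 + p2 ^ 2 * Real.log p2 <
        (p1 + p2) ^ 2 * Real.log (p1 + p2) :=
  stmt_8_general p2 h0
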